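/- Skolemization past Q: let Q be a monotone generalized quantifier of type ⟨k⟩ satisfying (M,∅) ∉ Q and (M,M^k) ∈ Q for all M. A formula of the form Qx̄ ∃f φ of ESO(Q), where f is an m-ary function symbol, is logically equivalent to ∃g Qx̄ ψ, where g is a (k+m)-ary function symbol and ψ arises from φ by replacing each term f(t₁,…,tₘ) by g(x̄, t₁,…,tₘ). -/

import Mathlib

open FirstOrder

universe u

namespace TeamSemantics

/-- A (local) generalized quantifier of type ⟨k⟩: to every universe `M` it assigns
a family of k-ary relations on `M`. -/
def Quant (k : ℕ) : Type (u + 1) :=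
  (M : Type u) → Set (Set (Fin k → M))

/-- `Q` is monotone (increasing). -/
def Quant.Mono {k : ℕ} (Q : Quant.{u} k) : Prop :=
  ∀ (M : Type u) (A B : Set (Fin k → M)), A ∈ Q M → A ⊆ B → B ∈ Q M

/-- `Q` is closed under isomorphisms (it is a class of structures `(M,R)`). -/
def Quant.IsoClosed {k : ℕ} (Q : Quant.{u} k) : Prop :=
  ∀ (M N : Type u) (e : M ≃ N) (A : Set (Fin k → M)),
    A ∈ Q M → ((fun a : Fin k → M => fun i => e (a i)) '' A) ∈ Q N

/-- Non-triviality: `(M,∅) ∉ Q` and `(M,M^k) ∈ Q` for all (nonempty) `M`. -/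
def Quant.NonTrivial {k : ℕ} (Q : Quant.{u} k) : Prop :=
  ∀ (M : Type u), Nonempty M → (∅ ∉ Q M ∧ Set.univ ∈ Q M)

/-- The trivially empty quantifier, used as a dummy parameter for `Q`-free logics. -/
def QEmpty (k : ℕ) : Quant.{u} k := fun _ => ∅

/-- Simultaneous update of an assignment at the tuple of variables `xs` by the tuple `a`. -/
def updVec {M : Type u} {k : ℕ} (s : ℕ → M) (xs : Fin k → ℕ) (a : Fin k → M) : ℕ → M :=
  (List.finRange k).foldl (fun t i => Function.update t (xs i) (a i)) s

/-- The set of variables of a first-order term. -/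
def tvarSet {L : FirstOrder.Language.{0, 0}} : L.Term ℕ → Set ℕ
  | .var x => {x}
  | .func _ ts => ⋃ i, tvarSet (ts i)

/-- Formulas (in negation normal form) of dependence/independence logic over `L`,
extended with a generalized quantifier of type ⟨k⟩.  The logics D, FO, FO(Q), D(Q)
and I(Q) are the fragments singled out below. -/
inductive TForm (L : FirstOrder.Language.{0, 0}) (k : ℕ) : Type
  | rel {n : ℕ} (R : L.Relations n) (ts : Fin n → L.Term ℕ)
  | nrel {n : ℕ} (R : L.Relations n) (ts : Fin n → L.Term ℕ)
  | tEq (t t' : L.Term ℕ)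
  | tNe (t t' : L.Term ℕ)
  | dep {n : ℕ} (ts : Fin n → L.Term ℕ) (t : L.Term ℕ)
  | ndep {n : ℕ} (ts : Fin n → L.Term ℕ) (t : L.Term ℕ)
  | indep {a b c : ℕ} (xb : Fin a → ℕ) (yb : Fin b → ℕ) (zb : Fin c → ℕ)
  | and (φ ψ : TForm L k)
  | or (φ ψ : TForm L k)
  | ex (y : ℕ) (φ : TForm L k)
  | all (y : ℕ) (φ : TForm L k)
  | qu (xs : Fin k → ℕ) (φ : TForm L k)

namespace TForm

variable {L : FirstOrder.Language.{0, 0}} {k : ℕ}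

/-- Formulas of dependence logic D (no independence atoms, no generalized quantifier). -/
def IsD : TForm L k → Prop
  | rel _ _ => True
  | nrel _ _ => True
  | tEq _ _ => True
  | tNe _ _ => True
  | dep _ _ => True
  | ndep _ _ => True
  | indep _ _ _ => False
  | and φ ψ => IsD φ ∧ IsD ψ
  | or φ ψ => IsD φ ∧ IsD ψ
  | ex _ φ => IsD φ
  | all _ φ => IsD φ
  | qu _ _ => False

/-- First-order formulas (no dependence/independence atoms, no generalized quantifier). -/
def IsFO : TForm L k → Prop
  | rel _ _ => True
  | nrel _ _ => True
  | tEq _ _ => True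
  | tNe _ _ => True
  | dep _ _ => False
  | ndep _ _ => False
  | indep _ _ _ => False
  | and φ ψ => IsFO φ ∧ IsFO ψ
  | or φ ψ => IsFO φ ∧ IsFO ψ
  | ex _ φ => IsFO φ
  | all _ φ => IsFO φ
  | qu _ _ => False

/-- Formulas of FO(Q) (no dependence/independence atoms). -/
def IsFOQ : TForm L k → Prop
  | rel _ _ => True
  | nrel _ _ => True
  | tEq _ _ => True
  | tNe _ _ => True
  | dep _ _ => False
  | ndep _ _ => False
  | indep _ _ _ => False
  | and φ ψ => IsFOQ φ ∧ IsFOQ ψ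
  | or φ ψ => IsFOQ φ ∧ IsFOQ ψ
  | ex _ φ => IsFOQ φ
  | all _ φ => IsFOQ φ
  | qu _ φ => IsFOQ φ

/-- Formulas of D(Q) (no independence atoms). -/
def IsDQ : TForm L k → Prop
  | rel _ _ => True
  | nrel _ _ => True
  | tEq _ _ => True
  | tNe _ _ => True
  | dep _ _ => True
  | ndep _ _ => True
  | indep _ _ _ => False
  | and φ ψ => IsDQ φ ∧ IsDQ ψ
  | or φ ψ => IsDQ φ ∧ IsDQ ψ
  | ex _ φ => IsDQ φ
  | all _ φ => IsDQ φ
  | qu _ φ => IsDQ φ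

/-- Formulas of I(Q) (independence atoms instead of dependence atoms). -/
def IsIQ : TForm L k → Prop
  | rel _ _ => True
  | nrel _ _ => True
  | tEq _ _ => True
  | tNe _ _ => True
  | dep _ _ => False
  | ndep _ _ => False
  | indep _ _ _ => True
  | and φ ψ => IsIQ φ ∧ IsIQ ψ
  | or φ ψ => IsIQ φ ∧ IsIQ ψ
  | ex _ φ => IsIQ φ
  | all _ φ => IsIQ φ
  | qu _ φ => IsIQ φ

/-- The set of free variables of a formula; all variables of a dependence or
independence atom count as free. -/
def FV : TForm L k → Set ℕ
  | rel _ ts => ⋃ i, tvarSet (ts i)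
  | nrel _ ts => ⋃ i, tvarSet (ts i)
  | tEq t t' => tvarSet t ∪ tvarSet t'
  | tNe t t' => tvarSet t ∪ tvarSet t'
  | dep ts t => (⋃ i, tvarSet (ts i)) ∪ tvarSet t
  | ndep ts t => (⋃ i, tvarSet (ts i)) ∪ tvarSet t
  | indep xb yb zb => Set.range xb ∪ Set.range yb ∪ Set.range zb
  | and φ ψ => FV φ ∪ FV ψ
  | or φ ψ => FV φ ∪ FV ψ
  | ex y φ => FV φ \ {y}
  | all y φ => FV φ \ {y}
  | qu xs φ => FV φ \ Set.range xs

end TForm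

variable {L : FirstOrder.Language.{0, 0}} {k : ℕ}

/-- Team semantics for D(Q)/I(Q).  A team is a set of assignments `ℕ → M`. -/
def TSat (Q : Quant.{u} k) (M : Type u) [L.Structure M] :
    TForm L k → Set (ℕ → M) → Prop
  | .rel R ts, X => ∀ s ∈ X, FirstOrder.Language.Structure.RelMap R (fun i => (ts i).realize s)
  | .nrel R ts, X => ∀ s ∈ X, ¬ FirstOrder.Language.Structure.RelMap R (fun i => (ts i).realize s)
  | .tEq t t', X => ∀ s ∈ X, t.realize s = t'.realize s
  | .tNe t t', X => ∀ s ∈ X, t.realize s ≠ t'.realize s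
  | .dep ts t, X => ∀ s ∈ X, ∀ s' ∈ X,
      (∀ i, (ts i).realize s = (ts i).realize s') → t.realize s = t.realize s'
  | .ndep _ _, X => X = ∅
  | .indep xb yb zb, X => ∀ s ∈ X, ∀ s' ∈ X, (∀ i, s (xb i) = s' (xb i)) →
      ∃ s₀ ∈ X, (∀ i, s₀ (xb i) = s (xb i)) ∧ (∀ i, s₀ (yb i) = s (yb i)) ∧
        (∀ i, s₀ (zb i) = s' (zb i))
  | .and φ ψ, X => TSat Q M φ X ∧ TSat Q M ψ X
  | .or φ ψ, X => ∃ Y Z, X = Y ∪ Z ∧ TSat Q M φ Y ∧ TSat Q M ψ Z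
  | .ex y φ, X => ∃ f : (ℕ → M) → M,
      TSat Q M φ ((fun s => Function.update s y (f s)) '' X)
  | .all y φ, X => TSat Q M φ {s' | ∃ s ∈ X, ∃ a : M, s' = Function.update s y a}
  | .qu xs φ, X => ∃ F : (ℕ → M) → Set (Fin k → M), (∀ s ∈ X, F s ∈ Q M) ∧
      TSat Q M φ {s' | ∃ s ∈ X, ∃ a ∈ F s, s' = updVec s xs a}

/-- Tarskian (single-assignment) semantics for the FO(Q)-fragment
(dependence and independence atoms are given a dummy interpretation). -/
def PSat (Q : Quant.{u} k) (M : Type u) [L.Structure M] :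
    TForm L k → (ℕ → M) → Prop
  | .rel R ts, s => FirstOrder.Language.Structure.RelMap R (fun i => (ts i).realize s)
  | .nrel R ts, s => ¬ FirstOrder.Language.Structure.RelMap R (fun i => (ts i).realize s)
  | .tEq t t', s => t.realize s = t'.realize s
  | .tNe t t', s => t.realize s ≠ t'.realize s
  | .dep _ _, _ => True
  | .ndep _ _, _ => False
  | .indep _ _ _, _ => True
  | .and φ ψ, s => PSat Q M φ s ∧ PSat Q M ψ s
  | .or φ ψ, s => PSat Q M φ s ∨ PSat Q M ψ s
  | .ex y φ, s => ∃ a : M, PSat Q M φ (Function.update s y a)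
  | .all y φ, s => ∀ a : M, PSat Q M φ (Function.update s y a)
  | .qu xs φ, s => {a : Fin k → M | PSat Q M φ (updVec s xs a)} ∈ Q M

/-- Truth of a sentence in a structure: satisfaction by the team of the empty assignment
(rendered with total assignments: every singleton team satisfies the sentence). -/
def TTrue (Q : Quant.{u} k) (M : Type u) [L.Structure M] (φ : TForm L k) : Prop :=
  ∀ s : ℕ → M, TSat Q M φ {s}

/-- `rel(X)`: the k-ary relation induced by a team `X` on the variables `xs`. -/
def relOf {M : Type u} (xs : Fin k → ℕ) (X : Set (ℕ → M)) : Set (Fin k → M) :=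
  (fun s => fun i => s (xs i)) '' X

end TeamSemantics
namespace TeamSemantics

/-- Terms over `L` together with second-order function variables
(`fvar n name ts` is the function variable of arity `n` named `name`,
applied to the terms `ts`). -/
inductive ETerm (L : FirstOrder.Language.{0, 0}) : Type
  | var (x : ℕ)
  | func {n : ℕ} (f : L.Functions n) (ts : Fin n → ETerm L)
  | fvar (n : ℕ) (name : ℕ) (ts : Fin n → ETerm L)

/-- Formulas of ESO(Q) (in negation normal form) over `L`, where `Q` has type ⟨k⟩:
atomic and negated atomic formulas (including second-order relation variables
`rvar`/`nrvar`), conjunction, disjunction, first-order quantifiers, the quantifier `Q`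
(`qu`), and existential second-order relation (`exrel`) and function (`exfun`)
quantifiers. -/
inductive EForm (L : FirstOrder.Language.{0, 0}) (k : ℕ) : Type
  | rel {n : ℕ} (R : L.Relations n) (ts : Fin n → ETerm L)
  | nrel {n : ℕ} (R : L.Relations n) (ts : Fin n → ETerm L)
  | eEq (t t' : ETerm L)
  | eNe (t t' : ETerm L)
  | rvar (n : ℕ) (name : ℕ) (ts : Fin n → ETerm L)
  | nrvar (n : ℕ) (name : ℕ) (ts : Fin n → ETerm L)
  | and (φ ψ : EForm L k)
  | or (φ ψ : EForm L k)
  | ex (x : ℕ) (φ : EForm L k)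
  | all (x : ℕ) (φ : EForm L k)
  | qu (xs : Fin k → ℕ) (φ : EForm L k)
  | exrel (n : ℕ) (name : ℕ) (φ : EForm L k)
  | exfun (n : ℕ) (name : ℕ) (φ : EForm L k)

/-- An assignment of relations to the second-order relation variables. -/
def RAssign (M : Type u) : Type u :=
  (n : ℕ) → ℕ → Set (Fin n → M)

/-- An assignment of functions to the second-order function variables. -/
def FAssign (M : Type u) : Type u :=
  (n : ℕ) → ℕ → ((Fin n → M) → M)

def RAssign.set {M : Type u} (ρ : RAssign M) (n name : ℕ) (R : Set (Fin n → M)) :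
    RAssign M :=
  fun m nm => if h : m = n ∧ nm = name then cast (by rw [h.1]) R else ρ m nm

def FAssign.set {M : Type u} (Fa : FAssign M) (n name : ℕ) (g : (Fin n → M) → M) :
    FAssign M :=
  fun m nm => if h : m = n ∧ nm = name then cast (by rw [h.1]) g else Fa m nm

variable {L : FirstOrder.Language.{0, 0}} {k : ℕ}

/-- Evaluation of an extended term. -/
def ETerm.eval {M : Type u} [L.Structure M] (Fa : FAssign M) (s : ℕ → M) :
    ETerm L → M
  | .var x => s x
  | .func f ts => FirstOrder.Language.Structure.funMap f (fun i => (ts i).eval Fa s)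
  | .fvar n name ts => Fa n name (fun i => (ts i).eval Fa s)

/-- Tarskian satisfaction for ESO(Q). -/
def ESat (Q : Quant.{u} k) (M : Type u) [L.Structure M]
    (ρ : RAssign M) (Fa : FAssign M) (s : ℕ → M) : EForm L k → Prop
  | .rel R ts => FirstOrder.Language.Structure.RelMap R (fun i => (ts i).eval Fa s)
  | .nrel R ts => ¬ FirstOrder.Language.Structure.RelMap R (fun i => (ts i).eval Fa s)
  | .eEq t t' => t.eval Fa s = t'.eval Fa s
  | .eNe t t' => t.eval Fa s ≠ t'.eval Fa s
  | .rvar n name ts => (fun i => (ts i).eval Fa s) ∈ ρ n name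
  | .nrvar n name ts => (fun i => (ts i).eval Fa s) ∉ ρ n name
  | .and φ ψ => ESat Q M ρ Fa s φ ∧ ESat Q M ρ Fa s ψ
  | .or φ ψ => ESat Q M ρ Fa s φ ∨ ESat Q M ρ Fa s ψ
  | .ex x φ => ∃ a : M, ESat Q M ρ Fa (Function.update s x a) φ
  | .all x φ => ∀ a : M, ESat Q M ρ Fa (Function.update s x a) φ
  | .qu xs φ => {a : Fin k → M | ESat Q M ρ Fa (updVec s xs a) φ} ∈ Q M
  | .exrel n name φ => ∃ R : Set (Fin n → M), ESat Q M (ρ.set n name R) Fa s φ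
  | .exfun n name φ => ∃ g : (Fin n → M) → M, ESat Q M ρ (Fa.set n name g) s φ

namespace ETerm

/-- First-order variables occurring in an extended term. -/
def fovars : ETerm L → Set ℕ
  | .var x => {x}
  | .func _ ts => ⋃ i, fovars (ts i)
  | .fvar _ _ ts => ⋃ i, fovars (ts i)

/-- Function variables (arity, name) occurring in an extended term. -/
def ffvars : ETerm L → Set (ℕ × ℕ)
  | .var _ => ∅
  | .func _ ts => ⋃ i, ffvars (ts i)
  | .fvar n name ts => insert (n, name) (⋃ i, ffvars (ts i))

end ETerm

namespace EForm

/-- Free first-order variables of an ESO(Q) formula. -/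
def fv : EForm L k → Set ℕ
  | rel _ ts => ⋃ i, (ts i).fovars
  | nrel _ ts => ⋃ i, (ts i).fovars
  | eEq t t' => t.fovars ∪ t'.fovars
  | eNe t t' => t.fovars ∪ t'.fovars
  | rvar _ _ ts => ⋃ i, (ts i).fovars
  | nrvar _ _ ts => ⋃ i, (ts i).fovars
  | and φ ψ => fv φ ∪ fv ψ
  | or φ ψ => fv φ ∪ fv ψ
  | ex x φ => fv φ \ {x}
  | all x φ => fv φ \ {x}
  | qu xs φ => fv φ \ Set.range xs
  | exrel _ _ φ => fv φ
  | exfun _ _ φ => fv φ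

/-- Free second-order relation variables. -/
def freeRVars : EForm L k → Set (ℕ × ℕ)
  | rel _ _ => ∅
  | nrel _ _ => ∅
  | eEq _ _ => ∅
  | eNe _ _ => ∅
  | rvar n name _ => {(n, name)}
  | nrvar n name _ => {(n, name)}
  | and φ ψ => freeRVars φ ∪ freeRVars ψ
  | or φ ψ => freeRVars φ ∪ freeRVars ψ
  | ex _ φ => freeRVars φ
  | all _ φ => freeRVars φ
  | qu _ φ => freeRVars φ
  | exrel n name φ => freeRVars φ \ {(n, name)}
  | exfun _ _ φ => freeRVars φ

/-- Free second-order function variables. -/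
def freeFVars : EForm L k → Set (ℕ × ℕ)
  | rel _ ts => ⋃ i, (ts i).ffvars
  | nrel _ ts => ⋃ i, (ts i).ffvars
  | eEq t t' => t.ffvars ∪ t'.ffvars
  | eNe t t' => t.ffvars ∪ t'.ffvars
  | rvar _ _ ts => ⋃ i, (ts i).ffvars
  | nrvar _ _ ts => ⋃ i, (ts i).ffvars
  | and φ ψ => freeFVars φ ∪ freeFVars ψ
  | or φ ψ => freeFVars φ ∪ freeFVars ψ
  | ex _ φ => freeFVars φ
  | all _ φ => freeFVars φ
  | qu _ φ => freeFVars φ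
  | exrel _ _ φ => freeFVars φ
  | exfun n name φ => freeFVars φ \ {(n, name)}

/-- A sentence: no free first-order variables and no free second-order variables. -/
def Sentence (φ : EForm L k) : Prop :=
  fv φ = ∅ ∧ freeRVars φ = ∅ ∧ freeFVars φ = ∅

/-- A sentence over the vocabulary `τ ∪ {R}`, where `R` is rendered as the
second-order relation variable of arity `r` named `0`. -/
def SentenceWithR (r : ℕ) (φ : EForm L k) : Prop :=
  fv φ = ∅ ∧ freeRVars φ ⊆ {(r, 0)} ∧ freeFVars φ = ∅

/-- No occurrence of the generalized quantifier `Q`: the formula is in ESO. -/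
def NoQu : EForm L k → Prop
  | rel _ _ => True
  | nrel _ _ => True
  | eEq _ _ => True
  | eNe _ _ => True
  | rvar _ _ _ => True
  | nrvar _ _ _ => True
  | and φ ψ => NoQu φ ∧ NoQu ψ
  | or φ ψ => NoQu φ ∧ NoQu ψ
  | ex _ φ => NoQu φ
  | all _ φ => NoQu φ
  | qu _ _ => False
  | exrel _ _ φ => NoQu φ
  | exfun _ _ φ => NoQu φ

/-- The relation variable `(r, name)` occurs only negatively (and is never rebound). -/
def OnlyNeg (r name : ℕ) : EForm L k → Prop
  | rel _ _ => True
  | nrel _ _ => True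
  | eEq _ _ => True
  | eNe _ _ => True
  | rvar n nm _ => ¬ (n = r ∧ nm = name)
  | nrvar _ _ _ => True
  | and φ ψ => OnlyNeg r name φ ∧ OnlyNeg r name ψ
  | or φ ψ => OnlyNeg r name φ ∧ OnlyNeg r name ψ
  | ex _ φ => OnlyNeg r name φ
  | all _ φ => OnlyNeg r name φ
  | qu _ φ => OnlyNeg r name φ
  | exrel n nm φ => ¬ (n = r ∧ nm = name) ∧ OnlyNeg r name φ
  | exfun _ _ φ => OnlyNeg r name φ

/-- Quantifier-free formulas. -/
def QFree : EForm L k → Prop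
  | rel _ _ => True
  | nrel _ _ => True
  | eEq _ _ => True
  | eNe _ _ => True
  | rvar _ _ _ => True
  | nrvar _ _ _ => True
  | and φ ψ => QFree φ ∧ QFree ψ
  | or φ ψ => QFree φ ∧ QFree ψ
  | ex _ _ => False
  | all _ _ => False
  | qu _ _ => False
  | exrel _ _ _ => False
  | exfun _ _ _ => False

/-- A prefix of first-order quantifiers from `{Q, ∀}` in front of a
quantifier-free formula. -/
def QuantPrefix : EForm L k → Prop
  | all _ φ => QuantPrefix φ
  | qu _ φ => QuantPrefix φ
  | φ => QFree φ

/-- Normal form: `∃f₁ ⋯ ∃fₙ Q′₁x₁ ⋯ Q′ₘxₘ ψ` with each `Q′ᵢ ∈ {Q, ∀}` and `ψ`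
quantifier-free. -/
def NormalForm : EForm L k → Prop
  | exfun _ _ φ => NormalForm φ
  | φ => QuantPrefix φ

/-- No second-order relation variables occur. -/
def NoRVar : EForm L k → Prop
  | rel _ _ => True
  | nrel _ _ => True
  | eEq _ _ => True
  | eNe _ _ => True
  | rvar _ _ _ => False
  | nrvar _ _ _ => False
  | and φ ψ => NoRVar φ ∧ NoRVar ψ
  | or φ ψ => NoRVar φ ∧ NoRVar ψ
  | ex _ φ => NoRVar φ
  | all _ φ => NoRVar φ
  | qu _ φ => NoRVar φ
  | exrel _ _ _ => False
  | exfun _ _ φ => NoRVar φ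

/-- None of the variables in `V` is bound anywhere in the formula. -/
def AvoidsBinding (V : Set ℕ) : EForm L k → Prop
  | rel _ _ => True
  | nrel _ _ => True
  | eEq _ _ => True
  | eNe _ _ => True
  | rvar _ _ _ => True
  | nrvar _ _ _ => True
  | and φ ψ => AvoidsBinding V φ ∧ AvoidsBinding V ψ
  | or φ ψ => AvoidsBinding V φ ∧ AvoidsBinding V ψ
  | ex x φ => x ∉ V ∧ AvoidsBinding V φ
  | all x φ => x ∉ V ∧ AvoidsBinding V φ
  | qu xs φ => (∀ i, xs i ∉ V) ∧ AvoidsBinding V φ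
  | exrel _ _ φ => AvoidsBinding V φ
  | exfun _ _ φ => AvoidsBinding V φ

/-- All function-variable (arity, name) pairs occurring anywhere in the formula,
whether free, bound, or as a binder. -/
def fNames : EForm L k → Set (ℕ × ℕ)
  | rel _ ts => ⋃ i, (ts i).ffvars
  | nrel _ ts => ⋃ i, (ts i).ffvars
  | eEq t t' => t.ffvars ∪ t'.ffvars
  | eNe t t' => t.ffvars ∪ t'.ffvars
  | rvar _ _ ts => ⋃ i, (ts i).ffvars
  | nrvar _ _ ts => ⋃ i, (ts i).ffvars
  | and φ ψ => fNames φ ∪ fNames ψ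
  | or φ ψ => fNames φ ∪ fNames ψ
  | ex _ φ => fNames φ
  | all _ φ => fNames φ
  | qu _ φ => fNames φ
  | exrel _ _ φ => fNames φ
  | exfun n name φ => insert (n, name) (fNames φ)

end EForm

/-- Truth of an ESO(Q) sentence in a structure. -/
def ETrue (Q : Quant.{u} k) (M : Type u) [L.Structure M] (φ : EForm L k) : Prop :=
  ∀ (ρ : RAssign M) (Fa : FAssign M) (s : ℕ → M), ESat Q M ρ Fa s φ

/-- Truth of an ESO(Q) sentence over `τ ∪ {R}` in the structure `(M, R)`,
where the distinguished relation variable of arity `r` named `0` is interpreted as `R`. -/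
def ETrueWithR (Q : Quant.{u} k) (M : Type u) [L.Structure M] {r : ℕ}
    (R : Set (Fin r → M)) (φ : EForm L k) : Prop :=
  ∀ (ρ : RAssign M) (Fa : FAssign M) (s : ℕ → M), ESat Q M (ρ.set r 0 R) Fa s φ

/-- `Q` is definable in ESO: `Q = Mod(φ)` for an ESO-sentence `φ` over the vocabulary
`{R}` with `R` of arity `k` (the empty language plus the distinguished relation
variable of arity `k` named `0`). -/
def ESODefinable (k : ℕ) (Q : Quant.{u} k) : Prop :=
  ∃ φ : EForm FirstOrder.Language.empty 0, φ.NoQu ∧ φ.SentenceWithR k ∧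
    ∀ (M : Type u), Nonempty M → ∀ R : Set (Fin k → M),
      letI := FirstOrder.Language.emptyStructure (M := M)
      (R ∈ Q M ↔ ETrueWithR (QEmpty 0) M R φ)

end TeamSemantics
namespace TeamSemantics

variable {L : FirstOrder.Language.{0, 0}} {k : ℕ}

/-- Replace every occurrence `f(t₁,…,tₘ)` of the function variable `(m, nf)` by
`g(x̄, t₁,…,tₘ)`, where `g` is the function variable `(k + m, ng)`. -/
def ETerm.skolemSubst (k m nf ng : ℕ) (xs : Fin k → ℕ) : ETerm L → ETerm L
  | .var x => .var x
  | .func f ts => .func f (fun i => (ts i).skolemSubst k m nf ng xs)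
  | .fvar n name ts =>
      if h : n = m ∧ name = nf then
        .fvar (k + m) ng (Fin.append (fun i => ETerm.var (xs i))
          (fun j => ((ts (Fin.cast h.1.symm j)).skolemSubst k m nf ng xs)))
      else .fvar n name (fun i => (ts i).skolemSubst k m nf ng xs)

/-- Replace every occurrence `f(t₁,…,tₘ)` of the function variable `(m, nf)` by
`g(x̄, t₁,…,tₘ)` throughout a formula (stopping where `(m, nf)` is rebound). -/
def EForm.skolemSubst (m nf ng : ℕ) (xs : Fin k → ℕ) : EForm L k → EForm L k
  | .rel R ts => .rel R (fun i => (ts i).skolemSubst k m nf ng xs)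
  | .nrel R ts => .nrel R (fun i => (ts i).skolemSubst k m nf ng xs)
  | .eEq t t' => .eEq (t.skolemSubst k m nf ng xs) (t'.skolemSubst k m nf ng xs)
  | .eNe t t' => .eNe (t.skolemSubst k m nf ng xs) (t'.skolemSubst k m nf ng xs)
  | .rvar n name ts => .rvar n name (fun i => (ts i).skolemSubst k m nf ng xs)
  | .nrvar n name ts => .nrvar n name (fun i => (ts i).skolemSubst k m nf ng xs)
  | .and φ ψ => .and (φ.skolemSubst m nf ng xs) (ψ.skolemSubst m nf ng xs)
  | .or φ ψ => .or (φ.skolemSubst m nf ng xs) (ψ.skolemSubst m nf ng xs)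
  | .ex x φ => .ex x (φ.skolemSubst m nf ng xs)
  | .all x φ => .all x (φ.skolemSubst m nf ng xs)
  | .qu zs φ => .qu zs (φ.skolemSubst m nf ng xs)
  | .exrel n name φ => .exrel n name (φ.skolemSubst m nf ng xs)
  | .exfun n name φ =>
      if n = m ∧ name = nf then .exfun n name φ
      else .exfun n name (φ.skolemSubst m nf ng xs)

/-- Every occurrence of a function variable in the term is of the form `fᵢ(x̄ⁱ)`:
it is `fvar (a i) i` applied to the tuple of distinct variables `arg i`. -/
def ETerm.GoodOcc (n : ℕ) (a : Fin n → ℕ) (arg : (i : Fin n) → Fin (a i) → ℕ) :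
    ETerm L → Prop
  | .var _ => True
  | .func _ ts => ∀ j, (ts j).GoodOcc n a arg
  | .fvar nn name ts => ∃ i : Fin n, ∃ h : nn = a i, name = i.val ∧
      ∀ j : Fin nn, ts j = ETerm.var (arg i (Fin.cast h j))

/-- Every occurrence of a function variable in the formula is of the form `fᵢ(x̄ⁱ)`. -/
def EForm.GoodOcc (n : ℕ) (a : Fin n → ℕ) (arg : (i : Fin n) → Fin (a i) → ℕ) :
    EForm L k → Prop
  | .rel _ ts => ∀ i, (ts i).GoodOcc n a arg
  | .nrel _ ts => ∀ i, (ts i).GoodOcc n a arg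
  | .eEq t t' => t.GoodOcc n a arg ∧ t'.GoodOcc n a arg
  | .eNe t t' => t.GoodOcc n a arg ∧ t'.GoodOcc n a arg
  | .rvar _ _ ts => ∀ i, (ts i).GoodOcc n a arg
  | .nrvar _ _ ts => ∀ i, (ts i).GoodOcc n a arg
  | .and φ ψ => φ.GoodOcc n a arg ∧ ψ.GoodOcc n a arg
  | .or φ ψ => φ.GoodOcc n a arg ∧ ψ.GoodOcc n a arg
  | .ex _ φ => φ.GoodOcc n a arg
  | .all _ φ => φ.GoodOcc n a arg
  | .qu _ φ => φ.GoodOcc n a arg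
  | .exrel _ _ φ => φ.GoodOcc n a arg
  | .exfun _ _ φ => φ.GoodOcc n a arg

/-- Replace each occurrence of the function variable named `i` (for `i < n`) by the
fresh first-order variable `ys i`, turning an extended term into a first-order term. -/
def ETerm.unfunc (n : ℕ) (ys : Fin n → ℕ) : ETerm L → L.Term ℕ
  | .var x => FirstOrder.Language.Term.var x
  | .func f ts => FirstOrder.Language.Term.func f (fun i => (ts i).unfunc n ys)
  | .fvar _ name _ =>
      if h : name < n then FirstOrder.Language.Term.var (ys ⟨name, h⟩)
      else FirstOrder.Language.Term.var 0

/-- The formula `θ` obtained from `ψ` by replacing each term `fᵢ(x̄ⁱ)` by the fresh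
variable `yᵢ` (second-order constructs, which do not occur in the intended use,
are mapped to a dummy formula). -/
def EForm.toTForm (n : ℕ) (ys : Fin n → ℕ) : EForm L k → TForm L k
  | .rel R ts => .rel R (fun i => (ts i).unfunc n ys)
  | .nrel R ts => .nrel R (fun i => (ts i).unfunc n ys)
  | .eEq t t' => .tEq (t.unfunc n ys) (t'.unfunc n ys)
  | .eNe t t' => .tNe (t.unfunc n ys) (t'.unfunc n ys)
  | .rvar _ _ _ => .tEq (FirstOrder.Language.Term.var 0) (FirstOrder.Language.Term.var 0)
  | .nrvar _ _ _ => .tEq (FirstOrder.Language.Term.var 0) (FirstOrder.Language.Term.var 0)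
  | .and φ ψ => .and (φ.toTForm n ys) (ψ.toTForm n ys)
  | .or φ ψ => .or (φ.toTForm n ys) (ψ.toTForm n ys)
  | .ex x φ => .ex x (φ.toTForm n ys)
  | .all x φ => .all x (φ.toTForm n ys)
  | .qu zs φ => .qu zs (φ.toTForm n ys)
  | .exrel _ _ φ => φ.toTForm n ys
  | .exfun _ _ φ => φ.toTForm n ys

end TeamSemantics


open TeamSemantics

namespace TeamSemantics

section Aux

variable {L : FirstOrder.Language.{0, 0}} {k : ℕ} {M : Type u} [L.Structure M]

lemma FAssign.set_same (Fa : FAssign M) (n name : ℕ) (g : (Fin n → M) → M) :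
    Fa.set n name g n name = g := by
  simp [FAssign.set]

lemma FAssign.set_ne (Fa : FAssign M) {n name : ℕ} (g : (Fin n → M) → M)
    {n' name' : ℕ} (h : ¬ (n' = n ∧ name' = name)) :
    Fa.set n name g n' name' = Fa n' name' := by
  simp [FAssign.set, h]

lemma FAssign.set_comm (Fa : FAssign M) {n1 nm1 n2 nm2 : ℕ}
    (g1 : (Fin n1 → M) → M) (g2 : (Fin n2 → M) → M)
    (h : (n1, nm1) ≠ (n2, nm2)) :
    (Fa.set n1 nm1 g1).set n2 nm2 g2 = (Fa.set n2 nm2 g2).set n1 nm1 g1 := by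
  funext n nm
  by_cases h1 : n = n1 ∧ nm = nm1 <;> by_cases h2 : n = n2 ∧ nm = nm2
  · obtain ⟨rfl, rfl⟩ := h1; obtain ⟨rfl, rfl⟩ := h2; exact absurd rfl h
  · obtain ⟨rfl, rfl⟩ := h1
    rw [FAssign.set_ne _ g2 h2, FAssign.set_same, FAssign.set_same]
  · obtain ⟨rfl, rfl⟩ := h2
    rw [FAssign.set_same, FAssign.set_ne _ g1 h1, FAssign.set_same]
  · rw [FAssign.set_ne _ g2 h2, FAssign.set_ne _ g1 h1, FAssign.set_ne _ g1 h1,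
      FAssign.set_ne _ g2 h2]

lemma FAssign.set_set_same (Fa : FAssign M) (n name : ℕ)
    (g1 g2 : (Fin n → M) → M) :
    (Fa.set n name g1).set n name g2 = Fa.set n name g2 := by
  funext n' nm'
  by_cases h : n' = n ∧ nm' = name
  · obtain ⟨rfl, rfl⟩ := h; rw [FAssign.set_same, FAssign.set_same]
  · rw [FAssign.set_ne _ g2 h, FAssign.set_ne _ g1 h, FAssign.set_ne _ g2 h]

lemma eval_congr (s : ℕ → M) (t : ETerm L) :
    ∀ (Fa₁ Fa₂ : FAssign M),
      (∀ p ∈ t.ffvars, Fa₁ p.1 p.2 = Fa₂ p.1 p.2) →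
      t.eval Fa₁ s = t.eval Fa₂ s := by
  induction t with
  | var x => intro _ _ _; rfl
  | func f ts ih =>
      intro Fa₁ Fa₂ h
      simp only [ETerm.eval]
      congr 1
      funext i
      exact ih i Fa₁ Fa₂ (fun p hp => h p (Set.mem_iUnion.2 ⟨i, hp⟩))
  | fvar n name ts ih =>
      intro Fa₁ Fa₂ h
      simp only [ETerm.eval]
      rw [h (n, name) (Set.mem_insert _ _)]
      congr 1
      funext i
      exact ih i Fa₁ Fa₂
        (fun p hp => h p (Set.mem_insert_iff.2 (Or.inr (Set.mem_iUnion.2 ⟨i, hp⟩))))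

lemma esat_congr (Q : Quant.{u} k) (ψ : EForm L k) :
    ∀ (ρ : RAssign M) (Fa₁ Fa₂ : FAssign M) (s : ℕ → M),
      (∀ p ∈ ψ.fNames, Fa₁ p.1 p.2 = Fa₂ p.1 p.2) →
      (ESat Q M ρ Fa₁ s ψ ↔ ESat Q M ρ Fa₂ s ψ) := by
  induction ψ with
  | rel R ts =>
      intro ρ Fa₁ Fa₂ s h
      simp only [ESat]
      rw [show (fun i => (ts i).eval Fa₁ s) = fun i => (ts i).eval Fa₂ s from
        funext fun i => eval_congr s (ts i) Fa₁ Fa₂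
          (fun p hp => h p (Set.mem_iUnion.2 ⟨i, hp⟩))]
  | nrel R ts =>
      intro ρ Fa₁ Fa₂ s h
      simp only [ESat]
      rw [show (fun i => (ts i).eval Fa₁ s) = fun i => (ts i).eval Fa₂ s from
        funext fun i => eval_congr s (ts i) Fa₁ Fa₂
          (fun p hp => h p (Set.mem_iUnion.2 ⟨i, hp⟩))]
  | eEq t t' =>
      intro ρ Fa₁ Fa₂ s h
      simp only [ESat]
      rw [eval_congr s t Fa₁ Fa₂ (fun p hp => h p (Set.mem_union_left _ hp)),
        eval_congr s t' Fa₁ Fa₂ (fun p hp => h p (Set.mem_union_right _ hp))]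
  | eNe t t' =>
      intro ρ Fa₁ Fa₂ s h
      simp only [ESat]
      rw [eval_congr s t Fa₁ Fa₂ (fun p hp => h p (Set.mem_union_left _ hp)),
        eval_congr s t' Fa₁ Fa₂ (fun p hp => h p (Set.mem_union_right _ hp))]
  | rvar n name ts =>
      intro ρ Fa₁ Fa₂ s h
      simp only [ESat]
      rw [show (fun i => (ts i).eval Fa₁ s) = fun i => (ts i).eval Fa₂ s from
        funext fun i => eval_congr s (ts i) Fa₁ Fa₂
          (fun p hp => h p (Set.mem_iUnion.2 ⟨i, hp⟩))]
  | nrvar n name ts =>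
      intro ρ Fa₁ Fa₂ s h
      simp only [ESat]
      rw [show (fun i => (ts i).eval Fa₁ s) = fun i => (ts i).eval Fa₂ s from
        funext fun i => eval_congr s (ts i) Fa₁ Fa₂
          (fun p hp => h p (Set.mem_iUnion.2 ⟨i, hp⟩))]
  | and φ ψ ih1 ih2 =>
      intro ρ Fa₁ Fa₂ s h
      simp only [ESat]
      exact and_congr
        (ih1 ρ Fa₁ Fa₂ s (fun p hp => h p (Set.mem_union_left _ hp)))
        (ih2 ρ Fa₁ Fa₂ s (fun p hp => h p (Set.mem_union_right _ hp)))
  | or φ ψ ih1 ih2 =>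
      intro ρ Fa₁ Fa₂ s h
      simp only [ESat]
      exact or_congr
        (ih1 ρ Fa₁ Fa₂ s (fun p hp => h p (Set.mem_union_left _ hp)))
        (ih2 ρ Fa₁ Fa₂ s (fun p hp => h p (Set.mem_union_right _ hp)))
  | ex x φ ih =>
      intro ρ Fa₁ Fa₂ s h
      simp only [ESat]
      exact exists_congr fun b => ih ρ Fa₁ Fa₂ _ h
  | all x φ ih =>
      intro ρ Fa₁ Fa₂ s h
      simp only [ESat]
      exact forall_congr' fun b => ih ρ Fa₁ Fa₂ _ h
  | qu zs φ ih =>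
      intro ρ Fa₁ Fa₂ s h
      simp only [ESat]
      rw [show {a : Fin k → M | ESat Q M ρ Fa₁ (updVec s zs a) φ}
          = {a : Fin k → M | ESat Q M ρ Fa₂ (updVec s zs a) φ} from
        Set.ext fun b => ih ρ Fa₁ Fa₂ _ h]
  | exrel n name φ ih =>
      intro ρ Fa₁ Fa₂ s h
      simp only [ESat]
      exact exists_congr fun R => ih _ Fa₁ Fa₂ s h
  | exfun n name φ ih =>
      intro ρ Fa₁ Fa₂ s h
      simp only [ESat]
      refine exists_congr fun g => ih ρ _ _ s ?_
      rintro ⟨pn, pm⟩ hp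
      by_cases h1 : pn = n ∧ pm = name
      · obtain ⟨rfl, rfl⟩ := h1
        rw [FAssign.set_same, FAssign.set_same]
      · rw [FAssign.set_ne _ g h1, FAssign.set_ne _ g h1]
        exact h (pn, pm) (Set.mem_insert_iff.2 (Or.inr hp))

lemma updVec_not_mem {xs : Fin k → ℕ} {a : Fin k → M} {x : ℕ}
    (hx : ∀ i, xs i ≠ x) (s : ℕ → M) : updVec s xs a x = s x := by
  unfold updVec
  generalize List.finRange k = l
  induction l generalizing s with
  | nil => rfl
  | cons i l ih =>
      rw [List.foldl_cons, ih, Function.update_of_ne (Ne.symm (hx i))]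

lemma updVec_apply {xs : Fin k → ℕ} (hxs : Function.Injective xs) (a : Fin k → M)
    (s : ℕ → M) (i : Fin k) : updVec s xs a (xs i) = a i := by
  unfold updVec
  have hm : i ∈ List.finRange k := List.mem_finRange i
  revert hm
  generalize List.finRange k = l
  intro hm
  induction l using List.reverseRecOn with
  | nil => exact absurd hm List.not_mem_nil
  | append_singleton l j ih =>
      rw [List.foldl_append, List.foldl_cons, List.foldl_nil]
      by_cases hij : i = j
      · subst hij; rw [Function.update_self]
      · rw [Function.update_of_ne (fun hh => hij (hxs hh))]
        exact ih ((List.mem_append.mp hm).resolve_right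
          (by simp [hij]))

lemma fin_cast_self {n : ℕ} (h : n = n) (i : Fin n) : Fin.cast h i = i := rfl

lemma skolem_eval (m nf ng : ℕ) (xs : Fin k → ℕ)
    (G : (Fin (k + m) → M) → M) (a : Fin k → M)
    (Fa : FAssign M) (s' : ℕ → M) (hs : ∀ i, s' (xs i) = a i) :
    ∀ t : ETerm L, (k + m, ng) ∉ t.ffvars →
      (t.skolemSubst k m nf ng xs).eval (Fa.set (k + m) ng G) s' =
        t.eval (Fa.set m nf (fun v => G (Fin.append a v))) s' := by
  intro t
  induction t with
  | var x => intro _; rfl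
  | func f ts ih =>
      intro hf
      simp only [ETerm.skolemSubst, ETerm.eval]
      congr 1
      funext i
      exact ih i (fun hmem => hf (Set.mem_iUnion.2 ⟨i, hmem⟩))
  | fvar n name ts ih =>
      intro hf
      have hne : ((n : ℕ), name) ≠ (k + m, ng) := fun hh => hf (hh ▸ Set.mem_insert _ _)
      have hargs : ∀ i, (k + m, ng) ∉ (ts i).ffvars := fun i hmem =>
        hf (Set.mem_insert_iff.2 (Or.inr (Set.mem_iUnion.2 ⟨i, hmem⟩)))
      by_cases h : n = m ∧ name = nf
      · obtain ⟨rfl, rfl⟩ := h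
        simp only [ETerm.skolemSubst, dif_pos (⟨rfl, rfl⟩ : n = n ∧ name = name), and_self, dite_true]
        simp only [ETerm.eval, FAssign.set_same]
        refine congrArg G (funext fun j => ?_)
        induction j using Fin.addCases with
        | left i =>
            rw [Fin.append_left, Fin.append_left]
            simp only [ETerm.eval]
            exact hs i
        | right j =>
            rw [Fin.append_right, Fin.append_right]
            rw [fin_cast_self]
            exact ih j (hargs j)
      · simp only [ETerm.skolemSubst, dif_neg h]
        simp only [ETerm.eval]
        rw [FAssign.set_ne _ G (fun h2 => hne (by rw [h2.1, h2.2])),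
          FAssign.set_ne _ _ h]
        congr 1
        funext i
        exact ih i (hargs i)

lemma skolem_esat (Q : Quant.{u} k) (m nf ng : ℕ) (xs : Fin k → ℕ)
    (G : (Fin (k + m) → M) → M) (ψ : EForm L k) :
    ∀ (ρ : RAssign M) (Fa : FAssign M) (a : Fin k → M) (s' : ℕ → M),
      (k + m, ng) ∉ ψ.fNames → ψ.AvoidsBinding (Set.range xs) →
      (∀ i, s' (xs i) = a i) →
      (ESat Q M ρ (Fa.set (k + m) ng G) s' (ψ.skolemSubst m nf ng xs) ↔
        ESat Q M ρ (Fa.set m nf (fun v => G (Fin.append a v))) s' ψ) := by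
  induction ψ with
  | rel R ts =>
      intro ρ Fa a s' hf hb hs
      simp only [EForm.skolemSubst, ESat]
      rw [show (fun i => ((ts i).skolemSubst k m nf ng xs).eval (Fa.set (k + m) ng G) s')
          = fun i => (ts i).eval (Fa.set m nf (fun v => G (Fin.append a v))) s' from
        funext fun i => skolem_eval m nf ng xs G a Fa s' hs (ts i)
          (fun hm => hf (Set.mem_iUnion.2 ⟨i, hm⟩))]
  | nrel R ts =>
      intro ρ Fa a s' hf hb hs
      simp only [EForm.skolemSubst, ESat]
      rw [show (fun i => ((ts i).skolemSubst k m nf ng xs).eval (Fa.set (k + m) ng G) s')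
          = fun i => (ts i).eval (Fa.set m nf (fun v => G (Fin.append a v))) s' from
        funext fun i => skolem_eval m nf ng xs G a Fa s' hs (ts i)
          (fun hm => hf (Set.mem_iUnion.2 ⟨i, hm⟩))]
  | eEq t t' =>
      intro ρ Fa a s' hf hb hs
      simp only [EForm.skolemSubst, ESat]
      rw [skolem_eval m nf ng xs G a Fa s' hs t (fun hm => hf (Set.mem_union_left _ hm)),
        skolem_eval m nf ng xs G a Fa s' hs t' (fun hm => hf (Set.mem_union_right _ hm))]
  | eNe t t' =>
      intro ρ Fa a s' hf hb hs
      simp only [EForm.skolemSubst, ESat]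
      rw [skolem_eval m nf ng xs G a Fa s' hs t (fun hm => hf (Set.mem_union_left _ hm)),
        skolem_eval m nf ng xs G a Fa s' hs t' (fun hm => hf (Set.mem_union_right _ hm))]
  | rvar n name ts =>
      intro ρ Fa a s' hf hb hs
      simp only [EForm.skolemSubst, ESat]
      rw [show (fun i => ((ts i).skolemSubst k m nf ng xs).eval (Fa.set (k + m) ng G) s')
          = fun i => (ts i).eval (Fa.set m nf (fun v => G (Fin.append a v))) s' from
        funext fun i => skolem_eval m nf ng xs G a Fa s' hs (ts i)
          (fun hm => hf (Set.mem_iUnion.2 ⟨i, hm⟩))]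
  | nrvar n name ts =>
      intro ρ Fa a s' hf hb hs
      simp only [EForm.skolemSubst, ESat]
      rw [show (fun i => ((ts i).skolemSubst k m nf ng xs).eval (Fa.set (k + m) ng G) s')
          = fun i => (ts i).eval (Fa.set m nf (fun v => G (Fin.append a v))) s' from
        funext fun i => skolem_eval m nf ng xs G a Fa s' hs (ts i)
          (fun hm => hf (Set.mem_iUnion.2 ⟨i, hm⟩))]
  | and φ ψ ih1 ih2 =>
      intro ρ Fa a s' hf hb hs
      simp only [EForm.skolemSubst, ESat]
      exact and_congr
        (ih1 ρ Fa a s' (fun hm => hf (Set.mem_union_left _ hm)) hb.1 hs)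
        (ih2 ρ Fa a s' (fun hm => hf (Set.mem_union_right _ hm)) hb.2 hs)
  | or φ ψ ih1 ih2 =>
      intro ρ Fa a s' hf hb hs
      simp only [EForm.skolemSubst, ESat]
      exact or_congr
        (ih1 ρ Fa a s' (fun hm => hf (Set.mem_union_left _ hm)) hb.1 hs)
        (ih2 ρ Fa a s' (fun hm => hf (Set.mem_union_right _ hm)) hb.2 hs)
  | ex x φ ih =>
      intro ρ Fa a s' hf hb hs
      simp only [EForm.skolemSubst, ESat]
      exact exists_congr fun b => ih ρ Fa a _ hf hb.2
        (fun i => by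
          rw [Function.update_of_ne (fun hh => hb.1 ⟨i, hh⟩)]
          exact hs i)
  | all x φ ih =>
      intro ρ Fa a s' hf hb hs
      simp only [EForm.skolemSubst, ESat]
      exact forall_congr' fun b => ih ρ Fa a _ hf hb.2
        (fun i => by
          rw [Function.update_of_ne (fun hh => hb.1 ⟨i, hh⟩)]
          exact hs i)
  | qu zs φ ih =>
      intro ρ Fa a s' hf hb hs
      simp only [EForm.skolemSubst, ESat]
      rw [show {b : Fin k → M |
            ESat Q M ρ (Fa.set (k + m) ng G) (updVec s' zs b) (φ.skolemSubst m nf ng xs)}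
          = {b : Fin k → M |
            ESat Q M ρ (Fa.set m nf (fun v => G (Fin.append a v))) (updVec s' zs b) φ} from
        Set.ext fun b => ih ρ Fa a _ hf hb.2
          (fun i => by
            rw [updVec_not_mem (fun j hh => hb.1 j ⟨i, hh.symm⟩)]
            exact hs i)]
  | exrel n name φ ih =>
      intro ρ Fa a s' hf hb hs
      simp only [EForm.skolemSubst, ESat]
      exact exists_congr fun R => ih _ Fa a s' hf hb hs
  | exfun n name φ ih =>
      intro ρ Fa a s' hf hb hs
      have hne : ((n : ℕ), name) ≠ (k + m, ng) := fun hh => hf (hh ▸ Set.mem_insert _ _)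
      have hfφ : (k + m, ng) ∉ φ.fNames := fun hm => hf (Set.mem_insert_iff.2 (Or.inr hm))
      by_cases h : n = m ∧ name = nf
      · obtain ⟨rfl, rfl⟩ := h
        simp only [EForm.skolemSubst, if_pos (⟨rfl, rfl⟩ : n = n ∧ name = name), ESat]
        refine exists_congr fun g => ?_
        rw [FAssign.set_set_same]
        refine esat_congr Q φ ρ _ _ s' ?_
        rintro ⟨pn, pm⟩ hp
        by_cases h1 : pn = n ∧ pm = name
        · obtain ⟨rfl, rfl⟩ := h1
          rw [FAssign.set_same, FAssign.set_same]
        · rw [FAssign.set_ne _ g h1, FAssign.set_ne _ g h1]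
          refine FAssign.set_ne _ G (fun h2 => ?_)
          exact hfφ (by rw [← h2.1, ← h2.2]; exact hp)
      · simp only [EForm.skolemSubst, if_neg h, ESat]
        refine exists_congr fun g => ?_
        have hne2 : ((n : ℕ), name) ≠ (m, nf) := fun hh =>
          h ⟨congrArg Prod.fst hh, congrArg Prod.snd hh⟩
        rw [FAssign.set_comm Fa G g hne.symm,
          ih (ρ) (Fa.set n name g) a s' hfφ hb hs,
          FAssign.set_comm Fa g _ hne2]

end Aux

end TeamSemantics


/-- Skolemization past `Q`: for monotone non-trivial `Q`, a formula
`Qx̄ ∃f φ` (with `f` an `m`-ary function symbol) is logically equivalent to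
`∃g Qx̄ ψ`, where `g` is `(k+m)`-ary and `ψ` arises from `φ` by replacing each term
`f(t₁,…,tₘ)` by `g(x̄, t₁,…,tₘ)`. -/
theorem skolemization_past_q
    (k : ℕ) (Q : Quant.{u} k) (hQ : Q.Mono) (hnt : Q.NonTrivial)
    (L : FirstOrder.Language.{0, 0}) (m nf ng : ℕ) (xs : Fin k → ℕ)
    (hxs : Function.Injective xs)
    (φ : EForm L k)
    (hbind : φ.AvoidsBinding (Set.range xs))
    (hfresh : (k + m, ng) ∉ φ.fNames)
    (M : Type u) [L.Structure M] [Nonempty M]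
    (ρ : RAssign M) (Fa : FAssign M) (s : ℕ → M) :
    ESat Q M ρ Fa s (EForm.qu xs (EForm.exfun m nf φ)) ↔
      ESat Q M ρ Fa s (EForm.exfun (k + m) ng (EForm.qu xs (φ.skolemSubst m nf ng xs))) := by
    classical
  simp only [ESat]
  constructor
  · intro hA
    set A := {a : Fin k → M |
      ∃ g : (Fin m → M) → M, ESat Q M ρ (Fa.set m nf g) (updVec s xs a) φ} with hAdef
    let G : (Fin (k + m) → M) → M := fun w =>
      if h : (fun i => w (Fin.castAdd m i)) ∈ A then
        Classical.choose h (fun j => w (Fin.natAdd k j))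
      else Classical.arbitrary M
    refine ⟨G, ?_⟩
    refine hQ M A _ hA ?_
    intro a ha
    have key : (fun v => G (Fin.append a v)) = Classical.choose ha := by
      funext v
      show (if h : (fun i => Fin.append a v (Fin.castAdd m i)) ∈ A then
          Classical.choose h (fun j => Fin.append a v (Fin.natAdd k j))
        else Classical.arbitrary M) = _
      have h1 : (fun i => Fin.append a v (Fin.castAdd m i)) = a :=
        funext fun i => Fin.append_left a v i
      rw [h1, dif_pos ha]
      exact congrArg _ (funext fun j => Fin.append_right a v j)
    have hspec := Classical.choose_spec ha
    rw [← key] at hspec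
    exact (skolem_esat Q m nf ng xs G φ ρ Fa a (updVec s xs a) hfresh hbind
      (fun i => updVec_apply hxs a s i)).mpr hspec
  · rintro ⟨G, hB⟩
    refine hQ M _ _ hB ?_
    intro a ha
    exact ⟨fun v => G (Fin.append a v),
      (skolem_esat Q m nf ng xs G φ ρ Fa a (updVec s xs a) hfresh hbind
        (fun i => updVec_apply hxs a s i)).mp ha⟩
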